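/- Let D = (T, χ, λ) be a hypertree decomposition of an extended subhypergraph H' = (E', Sp, Con), let p be a node of T with child c, and let C' be a [χ(p)]-component of H'. If C' ∩ cov(T_c) ≠ ∅ then C' ⊆ cov(T_c). In other words, cov(T_c) is a union of [χ(p)]-components of H'. -/

import Mathlib

open scoped Classical

/-- A hypergraph: a finite set of nonempty hyperedges over vertex type `V`. -/
structure HDHypergraph (V : Type) [DecidableEq V] where
  edges : Finset (Finset V)
  edge_nonempty : ∀ e ∈ edges, e.Nonempty

/-- The vertex set of a hypergraph: the union of its edges. -/
noncomputable def HDHypergraph.verts {V : Type} [DecidableEq V] (H : HDHypergraph V) :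
    Finset V := H.edges.sup id

/-- An extended subhypergraph `(E', Sp, Con)` of a hypergraph `H`. -/
structure ExtSubHG {V : Type} [DecidableEq V] (H : HDHypergraph V) where
  E : Finset (Finset V)
  Sp : Finset (Finset V)
  Con : Finset V
  E_subset : E ⊆ H.edges
  Sp_subset : ∀ s ∈ Sp, s ⊆ H.verts
  Con_subset : Con ⊆ H.verts

/-- The vertices of an extended subhypergraph: `V(H') = ⋃E' ∪ ⋃Sp`. -/
noncomputable def ExtSubHG.verts {V : Type} [DecidableEq V] {H : HDHypergraph V}
    (H' : ExtSubHG H) : Finset V := (H'.E ∪ H'.Sp).sup id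

/-- A finite rooted tree, given by a parent function from which the root is reachable. -/
structure RTree (α : Type) where
  root : α
  parent : α → α
  parent_root : parent root = root
  reaches_root : ∀ u, ∃ k, parent^[k] u = root

namespace RTree

variable {α : Type}

/-- `u` is an ancestor of `w` (possibly `u = w`). -/
def isAnc (T : RTree α) (u w : α) : Prop := ∃ k, T.parent^[k] w = u

/-- `u` is a proper ancestor of `w`. -/
def properAnc (T : RTree α) (u w : α) : Prop := T.isAnc u w ∧ u ≠ w

/-- `c` is a child of `u`. -/
def isChild (T : RTree α) (c u : α) : Prop := T.parent c = u ∧ c ≠ u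

/-- The subtree `T_u` rooted at `u`: all descendants of `u` (including `u`). -/
noncomputable def subtree (T : RTree α) [Fintype α] (u : α) : Finset α :=
  Finset.univ.filter (fun w => T.isAnc u w)

/-- The part of the tree strictly above `u`: all nodes outside the subtree `T_u`. -/
noncomputable def outside (T : RTree α) [Fintype α] (u : α) : Finset α :=
  Finset.univ.filter (fun w => ¬ T.isAnc u w)

/-- `x` lies on the (unique) path between `u` and `w` in the tree `T`. -/
def onPath (T : RTree α) (u w x : α) : Prop :=
  (T.isAnc x u ∨ T.isAnc x w) ∧ ∀ a, T.isAnc a u → T.isAnc a w → T.isAnc a x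

/-- A set of nodes is connected in `T` if it is closed under taking paths. -/
def connectedIn (T : RTree α) (S : Set α) : Prop :=
  ∀ u ∈ S, ∀ w ∈ S, ∀ x, T.onPath u w x → x ∈ S

/-- `u` is a leaf of `T`. -/
def isLeaf (T : RTree α) (u : α) : Prop := ∀ c, ¬ T.isChild c u

end RTree

/-- `[U]`-adjacency on a set `F` of (possibly special) edges:
`f` and `g` are adjacent iff they share a vertex outside `U`. -/
def UAdj {V : Type} [DecidableEq V] (F : Finset (Finset V)) (U : Finset V)
    (f g : Finset V) : Prop :=
  f ∈ F ∧ g ∈ F ∧ ((f ∩ g) \ U).Nonempty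

/-- `[U]`-connectedness: the transitive closure of `[U]`-adjacency (note that this
relation is reflexive exactly on the edges `f ∈ F` with `f \ U ≠ ∅`). -/
def UConn {V : Type} [DecidableEq V] (F : Finset (Finset V)) (U : Finset V)
    (f g : Finset V) : Prop :=
  Relation.TransGen (UAdj F U) f g

/-- A `[U]`-component of `F`: a maximally `[U]`-connected subset of `F`. -/
def IsUComponent {V : Type} [DecidableEq V] (F : Finset (Finset V)) (U : Finset V)
    (C : Finset (Finset V)) : Prop :=
  C ⊆ F ∧ C.Nonempty ∧ (∀ f ∈ C, ∀ g ∈ C, UConn F U f g) ∧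
  ∀ C', C ⊂ C' → C' ⊆ F → ∃ f ∈ C', ∃ g ∈ C', ¬ UConn F U f g

/-- Conditions (1)–(6): `(T, χ, lam)` is a hypertree decomposition of the extended
subhypergraph `(E', Sp, Con)` of the hypergraph `H`. -/
structure IsHD {V α : Type} [DecidableEq V] (H : HDHypergraph V)
    (E' Sp : Finset (Finset V)) (Con : Finset V)
    (T : RTree α) (χ : α → Finset V) (lam : α → Finset (Finset V)) : Prop where
  cond1 : ∀ u, (lam u ⊆ H.edges ∧ χ u ⊆ (lam u).sup id) ∨
    (∃ s ∈ Sp, lam u = {s} ∧ χ u = s)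
  cond2E : ∀ f ∈ E', ∃ u, f ⊆ χ u
  cond2Sp : ∀ f ∈ Sp, ∃ u, lam u = {f} ∧ χ u = f
  cond3 : ∀ v ∈ (E' ∪ Sp).sup id, T.connectedIn {u | v ∈ χ u}
  cond4 : ∀ u w, T.isAnc u w → χ w ∩ (lam u).sup id ⊆ χ u
  cond5 : ∀ u, (∃ s ∈ Sp, lam u = {s}) → T.isLeaf u
  cond6 : Con ⊆ χ T.root

/-- A classical hypertree decomposition of a hypergraph `H`
(Gottlob–Leone–Scarcello, conditions (1)–(4)). -/
structure IsClassicalHD {V α : Type} [DecidableEq V] (H : HDHypergraph V)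
    (T : RTree α) (χ : α → Finset V) (lam : α → Finset (Finset V)) : Prop where
  cover : ∀ e ∈ H.edges, ∃ u, e ⊆ χ u
  conn : ∀ v ∈ H.verts, T.connectedIn {u | v ∈ χ u}
  lam_edges : ∀ u, lam u ⊆ H.edges
  chi_sub_lam : ∀ u, χ u ⊆ (lam u).sup id
  special : ∀ u w, T.isAnc u w → χ w ∩ (lam u).sup id ⊆ χ u

/-- `cov(u)`: the (special) edges of `E' ∪ Sp` covered for the first time at node `u`. -/
noncomputable def covAt {V α : Type} [DecidableEq V] (T : RTree α)
    (χ : α → Finset V) (E' Sp : Finset (Finset V)) (u : α) : Finset (Finset V) :=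
  (E' ∪ Sp).filter (fun f => f ⊆ χ u ∧ ∀ u', T.properAnc u' u → ¬ f ⊆ χ u')

/-- `cov(T')` for a set of nodes `T'`. -/
noncomputable def covTree {V α : Type} [DecidableEq V] (T : RTree α)
    (χ : α → Finset V) (E' Sp : Finset (Finset V)) (S : Finset α) :
    Finset (Finset V) :=
  S.biUnion (covAt T χ E' Sp)

/-- Node `u` is a balanced separator of the decomposition `(T, χ)` of `(E', Sp, _)`:
every child subtree covers at most `(|E'| + |Sp|)/2` (special) edges, and the part of
the tree above `u` covers strictly fewer than `(|E'| + |Sp|)/2` (special) edges. -/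
noncomputable def IsBalancedSep {V α : Type} [DecidableEq V] [Fintype α]
    (T : RTree α) (χ : α → Finset V) (E' Sp : Finset (Finset V)) (u : α) : Prop :=
  (∀ c, T.isChild c u →
      2 * (covTree T χ E' Sp (T.subtree c)).card ≤ E'.card + Sp.card) ∧
  2 * (covTree T χ E' Sp (T.outside u)).card < E'.card + Sp.card

/-- The normal form of HDs of extended subhypergraphs (Definition: for every parent `p`
with child `c`, (1) `cov(T_c)` is a `[χ(p)]`-component; (2) some edge of it is covered
at `c`; (3) `χ(c) = ⋃λ(c) ∩ ⋃cov(T_c)`). -/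
noncomputable def IsNormalForm {V α : Type} [DecidableEq V] [Fintype α]
    (E' Sp : Finset (Finset V))
    (T : RTree α) (χ : α → Finset V) (lam : α → Finset (Finset V)) : Prop :=
  ∀ p c, T.isChild c p →
    IsUComponent (E' ∪ Sp) (χ p) (covTree T χ E' Sp (T.subtree c)) ∧
    (∃ f ∈ covTree T χ E' Sp (T.subtree c), f ⊆ χ c) ∧
    χ c = (lam c).sup id ∩ (covTree T χ E' Sp (T.subtree c)).sup id

/-!
If `f ∈ cov(T_c)` and `g` share a vertex `v ∉ χ(p)`, then `v` lies in the bag of a node of `T_c`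
covering `f`. The nodes whose bags contain `v` form a connected subtree which misses `p`, the
parent of `c`, so every node covering `g` lies in `T_c`; the topmost of them puts `g` into
`cov(T_c)`. Thus `cov(T_c)` is closed under `[χ(p)]`-adjacency and absorbs every
`[χ(p)]`-component it meets.
-/

namespace RTree

variable {α : Type} (T : RTree α)

lemma isAnc_trans {a b c : α} (hab : T.isAnc a b) (hbc : T.isAnc b c) : T.isAnc a c := by
  obtain ⟨j, rfl⟩ := hab
  obtain ⟨k, rfl⟩ := hbc
  exact ⟨j + k, Function.iterate_add_apply _ _ _ _⟩

lemma isAnc_parent (u : α) : T.isAnc (T.parent u) u := ⟨1, rfl⟩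

lemma isAnc_or_isAnc_of_isAnc {a b u : α} (ha : T.isAnc a u) (hb : T.isAnc b u) :
    T.isAnc a b ∨ T.isAnc b a := by
  obtain ⟨i, rfl⟩ := ha
  obtain ⟨j, rfl⟩ := hb
  rcases le_total i j with h | h
  · exact .inr ⟨j - i, by rw [← Function.iterate_add_apply, Nat.sub_add_cancel h]⟩
  · exact .inl ⟨i - j, by rw [← Function.iterate_add_apply, Nat.sub_add_cancel h]⟩

lemma isAnc_parent_of_properAnc {a u : α} (h : T.properAnc a u) : T.isAnc a (T.parent u) := by
  obtain ⟨⟨k, hk⟩, hne⟩ := h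
  cases k with
  | zero => exact absurd hk.symm hne
  | succ k => exact ⟨k, hk⟩

lemma iterate_parent_eq_root_of_le {u : α} {r m : ℕ} (hr : T.parent^[r] u = T.root)
    (hrm : r ≤ m) : T.parent^[m] u = T.root := by
  rw [← Nat.sub_add_cancel hrm, Function.iterate_add_apply, hr,
    Function.iterate_fixed T.parent_root]

/-- For `a ≠ b` the node `b` is periodic under `parent`; iterating whole periods past its
distance to the root shows that `b` is the root. -/
lemma isAnc_antisymm {a b : α} (hab : T.isAnc a b) (hba : T.isAnc b a) : a = b := by
  obtain ⟨j, rfl⟩ := hab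
  obtain ⟨k, hk⟩ := hba
  rcases Nat.eq_zero_or_pos j with rfl | hj
  · rfl
  obtain ⟨r, hr⟩ := T.reaches_root b
  have hperiod : T.parent^[(k + j) * r] b = b := by
    rw [Function.iterate_mul, Function.iterate_fixed]
    rwa [Function.iterate_add_apply]
  have hb : b = T.root :=
    hperiod.symm.trans (T.iterate_parent_eq_root_of_le hr (Nat.le_mul_of_pos_left r (by omega)))
  rw [hb, Function.iterate_fixed T.parent_root]

instance : IsTrans α T.properAnc where
  trans _ _ _ hab hbc := ⟨T.isAnc_trans hab.1 hbc.1, fun hac => by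
    subst hac
    exact hab.2 (T.isAnc_antisymm hab.1 hbc.1)⟩

instance : Std.Irrefl T.properAnc where
  irrefl _ h := h.2 rfl

lemma wellFounded_properAnc [Finite α] : WellFounded T.properAnc :=
  Finite.wellFounded_of_trans_of_irrefl _

lemma onPath_parent_of_isAnc_of_not_isAnc {c p u w : α} (hc : T.isChild c p)
    (hu : T.isAnc c u) (hw : ¬ T.isAnc c w) : T.onPath u w p := by
  refine ⟨.inl (T.isAnc_trans (hc.1 ▸ T.isAnc_parent c) hu), fun a hau haw => ?_⟩
  rcases T.isAnc_or_isAnc_of_isAnc hau hu with hac | hca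
  · rcases eq_or_ne a c with rfl | hne
    · exact absurd haw hw
    · exact hc.1 ▸ T.isAnc_parent_of_properAnc ⟨hac, hne⟩
  · exact absurd (T.isAnc_trans hca haw) hw

lemma connectedIn.isAnc_of_mem {T : RTree α} {S : Set α} (hS : T.connectedIn S) {c p u w : α}
    (hc : T.isChild c p) (hp : p ∉ S) (hu : u ∈ S) (hcu : T.isAnc c u) (hw : w ∈ S) :
    T.isAnc c w :=
  by_contra fun hcw => hp (hS u hu w hw p (T.onPath_parent_of_isAnc_of_not_isAnc hc hcu hcw))

end RTree

lemma IsUComponent.subset_of_inter_nonempty {V : Type} [DecidableEq V]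
    {F C S : Finset (Finset V)} {U : Finset V} (hC : IsUComponent F U C)
    (hS : ∀ f ∈ S, ∀ g, UAdj F U f g → g ∈ S) (hCS : (C ∩ S).Nonempty) : C ⊆ S := by
  obtain ⟨f, hf⟩ := hCS
  obtain ⟨hfC, hfS⟩ := Finset.mem_inter.mp hf
  intro g hg
  exact (Relation.transGen_swap.mpr (hC.2.2.1 _ hfC g hg)).closed'
    (fun hgh hg => hS _ hg _ hgh) hfS

section HypertreeDecomposition

variable {V α : Type} [DecidableEq V] {H : HDHypergraph V} {E' Sp : Finset (Finset V)}
  {Con : Finset V} {T : RTree α} {χ : α → Finset V} {lam : α → Finset (Finset V)}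

lemma subset_of_mem_covAt {f : Finset V} {u : α} (hf : f ∈ covAt T χ E' Sp u) : f ⊆ χ u :=
  (Finset.mem_filter.mp hf).2.1

lemma IsHD.exists_mem_covAt [Finite α] (hD : IsHD H E' Sp Con T χ lam) {f : Finset V}
    (hf : f ∈ E' ∪ Sp) : ∃ w, f ∈ covAt T χ E' Sp w := by
  have hcovered : ∃ u, f ⊆ χ u := by
    rcases Finset.mem_union.mp hf with hfE | hfSp
    · exact hD.cond2E f hfE
    · obtain ⟨u, -, hu⟩ := hD.cond2Sp f hfSp
      exact ⟨u, hu.ge⟩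
  obtain ⟨w, hw, hmin⟩ := T.wellFounded_properAnc.has_min {w | f ⊆ χ w} hcovered
  exact ⟨w, Finset.mem_filter.mpr ⟨hf, hw, fun u' hu' hfu' => hmin u' hfu' hu'⟩⟩

lemma IsHD.mem_covTree_subtree_of_uAdj [Fintype α] (hD : IsHD H E' Sp Con T χ lam)
    {c p : α} (hc : T.isChild c p) {f g : Finset V}
    (hf : f ∈ covTree T χ E' Sp (T.subtree c)) (hfg : UAdj (E' ∪ Sp) (χ p) f g) :
    g ∈ covTree T χ E' Sp (T.subtree c) := by
  obtain ⟨hfF, hgF, v, hv⟩ := hfg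
  simp only [Finset.mem_sdiff, Finset.mem_inter] at hv
  obtain ⟨⟨hvf, hvg⟩, hvp⟩ := hv
  obtain ⟨u, hu, hfu⟩ := Finset.mem_biUnion.mp hf
  obtain ⟨w, hgw⟩ := hD.exists_mem_covAt hgF
  have hcw : T.isAnc c w :=
    (hD.cond3 v (Finset.le_sup (f := id) hfF hvf)).isAnc_of_mem hc hvp
      (subset_of_mem_covAt hfu hvf) (Finset.mem_filter.mp hu).2 (subset_of_mem_covAt hgw hvg)
  exact Finset.mem_biUnion.mpr ⟨w, Finset.mem_filter.mpr ⟨Finset.mem_univ w, hcw⟩, hgw⟩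

end HypertreeDecomposition

/-- `cov(T_c)` is a union of `[χ(p)]`-components: any `[χ(p)]`-component
meeting `cov(T_c)` is contained in it. -/
theorem cov_subtree_union_of_components {V α : Type} [DecidableEq V] [Fintype α]
    (H : HDHypergraph V) (H' : ExtSubHG H) (T : RTree α)
    (χ : α → Finset V) (lam : α → Finset (Finset V))
    (hD : IsHD H H'.E H'.Sp H'.Con T χ lam)
    (p c : α) (hc : T.isChild c p)
    (C' : Finset (Finset V)) (hC : IsUComponent (H'.E ∪ H'.Sp) (χ p) C')
    (hmeet : (C' ∩ covTree T χ H'.E H'.Sp (T.subtree c)).Nonempty) :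
    C' ⊆ covTree T χ H'.E H'.Sp (T.subtree c) :=
  hC.subset_of_inter_nonempty (fun _ hf _ hfg => hD.mem_covTree_subtree_of_uAdj hc hf hfg) hmeet
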